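/- arXiv:1405.1773 — 3 statements merged into one kernel-verified Lean document; each statement's English description precedes it below -/
import Mathlib

section
/- Let e1, e2 be the standard basis of ℝ². Let U = e1⊗e2⊗e2 + e2⊗e1⊗e2 + e2⊗e2⊗e1 ∈ ℝ^{2×2×2}. Then the tensor spectral norm of U equals 2/√3, i.e., the maximum of ⟨U, u⊗v⊗w⟩ over unit vectors u,v,w ∈ ℝ² is 2/√3. -/
open scoped BigOperators

noncomputable def enorm {d : ℕ} (u : Fin d → ℝ) : ℝ := Real.sqrt (∑ i, (u i)^2)

def tOuter {d1 d2 d3 : ℕ} (u : Fin d1 → ℝ) (v : Fin d2 → ℝ) (w : Fin d3 → ℝ) :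
    Fin d1 → Fin d2 → Fin d3 → ℝ := fun a b c => u a * v b * w c

noncomputable def tinner {d1 d2 d3 : ℕ} (X Y : Fin d1 → Fin d2 → Fin d3 → ℝ) : ℝ :=
  ∑ a, ∑ b, ∑ c, X a b c * Y a b c

noncomputable def specNorm {d1 d2 d3 : ℕ} (X : Fin d1 → Fin d2 → Fin d3 → ℝ) : ℝ :=
  sSup {t : ℝ | ∃ u v w, enorm u ≤ 1 ∧ enorm v ≤ 1 ∧ enorm w ≤ 1 ∧
    t = tinner X (tOuter u v w)}

noncomputable def hsNorm {d1 d2 d3 : ℕ} (X : Fin d1 → Fin d2 → Fin d3 → ℝ) : ℝ :=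
  Real.sqrt (tinner X X)

noncomputable def nucNorm {d1 d2 d3 : ℕ} (X : Fin d1 → Fin d2 → Fin d3 → ℝ) : ℝ :=
  sSup {t : ℝ | ∃ Y, specNorm Y ≤ 1 ∧ t = tinner Y X}

noncomputable def maxNorm {d1 d2 d3 : ℕ} (X : Fin d1 → Fin d2 → Fin d3 → ℝ) : ℝ :=
  sSup {t : ℝ | ∃ a b c, t = |X a b c|}

noncomputable def e2 (i : Fin 2) : Fin 2 → ℝ := fun j => if j = i then 1 else 0

/-!
On a triple of vectors of ℝ² the tensor `U` evaluates to the trilinear form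
`f = u₀v₁w₁ + u₁v₀w₁ + u₁v₁w₀`, and `3 f² ≤ 4 ‖u‖²‖v‖²‖w‖²` is a sum-of-squares identity:
Cauchy–Schwarz in `u` reduces it to `3 ((v₁w₁)² + (v₀w₁ + v₁w₀)²) ≤ 4 ‖v‖²‖w‖²`, whose defect is
`(2v₀w₀ - v₁w₁)² + (v₀w₁ - v₁w₀)²`. Equality holds at `u = v = w = (1, √2)/√3`.
-/

lemma enorm_le_one_iff {d : ℕ} (u : Fin d → ℝ) : _root_.enorm u ≤ 1 ↔ ∑ i, u i ^ 2 ≤ 1 :=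
  Real.sqrt_le_one

lemma tinner_add_left {d1 d2 d3 : ℕ} (X Y Z : Fin d1 → Fin d2 → Fin d3 → ℝ) :
    tinner (X + Y) Z = tinner X Z + tinner Y Z := by
  simp only [tinner, Pi.add_apply, add_mul, Finset.sum_add_distrib]

lemma tinner_tOuter_tOuter {d1 d2 d3 : ℕ} (a u : Fin d1 → ℝ) (b v : Fin d2 → ℝ)
    (c w : Fin d3 → ℝ) :
    tinner (tOuter a b c) (tOuter u v w) = (a ⬝ᵥ u) * (b ⬝ᵥ v) * (c ⬝ᵥ w) := by
  simp only [dotProduct]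
  rw [mul_assoc, Finset.sum_mul_sum, Finset.sum_mul_sum]
  simp only [tinner, tOuter, Finset.mul_sum]
  refine Finset.sum_congr rfl fun i _ => Finset.sum_congr rfl fun j _ =>
    Finset.sum_congr rfl fun k _ => ?_
  ring

lemma e2_dotProduct (i : Fin 2) (u : Fin 2 → ℝ) : e2 i ⬝ᵥ u = u i := by
  fin_cases i <;> simp [e2, dotProduct]

lemma specNorm_eq_of_le_of_eq {d1 d2 d3 : ℕ} (X : Fin d1 → Fin d2 → Fin d3 → ℝ) (M : ℝ)
    (hle : ∀ u v w, _root_.enorm u ≤ 1 → _root_.enorm v ≤ 1 → _root_.enorm w ≤ 1 →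
      tinner X (tOuter u v w) ≤ M)
    (heq : ∃ u v w, _root_.enorm u ≤ 1 ∧ _root_.enorm v ≤ 1 ∧ _root_.enorm w ≤ 1 ∧
      tinner X (tOuter u v w) = M) :
    specNorm X = M := by
  refine IsGreatest.csSup_eq ⟨?_, ?_⟩
  · obtain ⟨u, v, w, hu, hv, hw, h⟩ := heq
    exact ⟨u, v, w, hu, hv, hw, h.symm⟩
  · rintro t ⟨u, v, w, hu, hv, hw, rfl⟩
    exact hle u v w hu hv hw

lemma three_mul_sq_le (u₀ u₁ v₀ v₁ w₀ w₁ : ℝ) :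
    3 * (u₀ * v₁ * w₁ + u₁ * v₀ * w₁ + u₁ * v₁ * w₀) ^ 2 ≤
      4 * ((u₀ ^ 2 + u₁ ^ 2) * (v₀ ^ 2 + v₁ ^ 2) * (w₀ ^ 2 + w₁ ^ 2)) := by
  linear_combination 3 * sq_nonneg (u₀ * (v₀ * w₁ + v₁ * w₀) - u₁ * (v₁ * w₁))
    + mul_nonneg (add_nonneg (sq_nonneg u₀) (sq_nonneg u₁))
      (add_nonneg (sq_nonneg (2 * v₀ * w₀ - v₁ * w₁)) (sq_nonneg (v₀ * w₁ - v₁ * w₀)))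

lemma le_two_div_sqrt_three_of_three_mul_sq_le {x : ℝ} (h : 3 * x ^ 2 ≤ 4) :
    x ≤ 2 / Real.sqrt 3 := by
  have h43 : Real.sqrt (4 / 3) = 2 / Real.sqrt 3 := by
    rw [Real.sqrt_div' _ (by norm_num : (0 : ℝ) ≤ 3), show (4 : ℝ) = 2 ^ 2 by norm_num,
      Real.sqrt_sq (by norm_num)]
  calc x ≤ |x| := le_abs_self x
    _ ≤ Real.sqrt (4 / 3) := Real.abs_le_sqrt (by linarith)
    _ = 2 / Real.sqrt 3 := h43

lemma trilinear_le_two_div_sqrt_three {u v w : Fin 2 → ℝ} (hu : _root_.enorm u ≤ 1)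
    (hv : _root_.enorm v ≤ 1) (hw : _root_.enorm w ≤ 1) :
    u 0 * v 1 * w 1 + u 1 * v 0 * w 1 + u 1 * v 1 * w 0 ≤ 2 / Real.sqrt 3 := by
  rw [_root_.enorm_le_one_iff, Fin.sum_univ_two] at hu hv hw
  refine le_two_div_sqrt_three_of_three_mul_sq_le ?_
  calc _ ≤ 4 * ((u 0 ^ 2 + u 1 ^ 2) * (v 0 ^ 2 + v 1 ^ 2) * (w 0 ^ 2 + w 1 ^ 2)) :=
        three_mul_sq_le _ _ _ _ _ _
    _ ≤ 4 * 1 := by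
        gcongr
        exact mul_le_one₀ (mul_le_one₀ hu (by positivity) hv) (by positivity) hw
    _ = 4 := mul_one 4

lemma exists_trilinear_eq_two_div_sqrt_three :
    ∃ x : Fin 2 → ℝ, _root_.enorm x ≤ 1 ∧
      x 0 * x 1 * x 1 + x 1 * x 0 * x 1 + x 1 * x 1 * x 0 = 2 / Real.sqrt 3 := by
  refine ⟨![1 / Real.sqrt 3, Real.sqrt 2 / Real.sqrt 3], ?_, ?_⟩
  · rw [_root_.enorm_le_one_iff, Fin.sum_univ_two]
    norm_num [div_pow]
  · simp only [Matrix.cons_val_zero, Matrix.cons_val_one]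
    field_simp
    norm_num

theorem specNorm_U_eq :
    specNorm (tOuter (e2 0) (e2 1) (e2 1) + tOuter (e2 1) (e2 0) (e2 1)
      + tOuter (e2 1) (e2 1) (e2 0)) = 2 / Real.sqrt 3 := by
  have hval : ∀ u v w : Fin 2 → ℝ,
      tinner (tOuter (e2 0) (e2 1) (e2 1) + tOuter (e2 1) (e2 0) (e2 1)
        + tOuter (e2 1) (e2 1) (e2 0)) (tOuter u v w)
      = u 0 * v 1 * w 1 + u 1 * v 0 * w 1 + u 1 * v 1 * w 0 := fun u v w => by
    simp only [tinner_add_left, tinner_tOuter_tOuter, e2_dotProduct]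
  refine specNorm_eq_of_le_of_eq _ _ (fun u v w hu hv hw => ?_) ?_
  · rw [hval]
    exact trilinear_le_two_div_sqrt_three hu hv hw
  · obtain ⟨x, hx, hx_eq⟩ := exists_trilinear_eq_two_div_sqrt_three
    exact ⟨x, x, x, hx, hx, hx, (hval x x x).trans hx_eq⟩
end

section
/- Let X ∈ ℝ^{d1×d2×d3} admit a bi-orthogonal decomposition X = Σ_{i=1}^r λ_i (u_i ⊗ v_i ⊗ w_i) with λ_i ≠ 0 and u_i^⊤u_j = δ_{ij}, v_i^⊤v_j · w_i^⊤w_j = δ_{ij} for all i,j (i.e., u_i orthonormal and the pairs (v_i,w_i) bi-orthogonal). Then the tensor nuclear norm satisfies ‖X‖_* = Σ_{i=1}^r ‖λ_i v_i ⊗ w_i‖_HS — equivalently, writing the decomposition as Σ_i u_i ⊗ w̃_i with matrices w̃_i, one has ‖X‖_* = Σ_i ‖w̃_i‖_HS. -/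
open scoped BigOperators

/-!
Both `u i ⊗ v i ⊗ w i` and the matrices `v i ⊗ w i` are orthonormal families, so
`‖λ i v i ⊗ w i‖_HS = |λ i|`. For `‖Y‖ ≤ 1`, `⟨Y, X⟩ = ∑ λ i ⟨Y, u i ⊗ v i ⊗ w i⟩ ≤ ∑ |λ i|`.
Conversely the certificate `Y = ∑ sign (λ i) u i ⊗ v i ⊗ w i` pairs with `X` to `∑ |λ i|`, and
`‖Y‖ ≤ 1` because `⟨Y, x ⊗ y ⊗ z⟩ = ∑ ± ⟨u i, x⟩ ⟨v i ⊗ w i, y ⊗ z⟩`, where Bessel's inequality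
bounds both coefficient sequences in `ℓ²` by `1`.
-/

open Matrix Finset

section DotProduct

variable {ι κ R : Type*} [Fintype ι] [Fintype κ]

theorem dotProduct_prod_mul [CommSemiring R] (a c : ι → R) (b d : κ → R) :
    (fun p : ι × κ => a p.1 * b p.2) ⬝ᵥ (fun p => c p.1 * d p.2) = (a ⬝ᵥ c) * (b ⬝ᵥ d) := by
  simp only [dotProduct, Fintype.sum_prod_type, sum_mul_sum]
  exact sum_congr rfl fun _ _ => sum_congr rfl fun _ _ => by ring

theorem sum_sq_dotProduct_le_of_orthonormal [DecidableEq κ] {f : κ → ι → ℝ}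
    (hf : ∀ i j, f i ⬝ᵥ f j = if i = j then 1 else 0) (x : ι → ℝ) :
    ∑ i, (f i ⬝ᵥ x) ^ 2 ≤ x ⬝ᵥ x := by
  have hon : Orthonormal ℝ fun i => WithLp.toLp 2 (f i) :=
    orthonormal_iff_ite.2 fun i j => by
      simpa [EuclideanSpace.inner_eq_star_dotProduct, dotProduct_comm] using hf i j
  have hbessel := hon.sum_inner_products_le (WithLp.toLp 2 x) (s := univ)
  rw [EuclideanSpace.real_norm_sq_eq] at hbessel
  convert hbessel using 1
  · simp [EuclideanSpace.inner_eq_star_dotProduct, dotProduct_comm x]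
  · simp [dotProduct, sq]

theorem sum_sum_mul_mul_sq [CommSemiring R] (t : R) (v : ι → R) (w : κ → R) :
    ∑ b, ∑ c, (t * v b * w c) ^ 2 = t ^ 2 * ((v ⬝ᵥ v) * (w ⬝ᵥ w)) := by
  simp only [dotProduct]
  rw [sum_mul_sum, mul_sum]
  refine sum_congr rfl fun _ _ => ?_
  rw [mul_sum]
  exact sum_congr rfl fun _ _ => by ring

end DotProduct

theorem sum_mul_mul_le_one {ι : Type*} [Fintype ι] {s a b : ι → ℝ} (hs : ∀ i, |s i| ≤ 1)
    (ha : ∑ i, a i ^ 2 ≤ 1) (hb : ∑ i, b i ^ 2 ≤ 1) : ∑ i, s i * (a i * b i) ≤ 1 := by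
  have hterm (i : ι) : s i * (a i * b i) ≤ (a i ^ 2 + b i ^ 2) / 2 := by
    obtain ⟨hs₁, hs₂⟩ := abs_le.1 (hs i)
    -- `(1 - s) (a + b)² + (1 + s) (a - b)² = 2 (a² + b²) - 4 s a b`
    nlinarith [mul_nonneg (sub_nonneg.2 hs₂) (sq_nonneg (a i + b i)),
      mul_nonneg (neg_le_iff_add_nonneg'.1 hs₁) (sq_nonneg (a i - b i))]
  calc ∑ i, s i * (a i * b i) ≤ ∑ i, (a i ^ 2 + b i ^ 2) / 2 := sum_le_sum fun i _ => hterm i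
    _ = ((∑ i, a i ^ 2) + ∑ i, b i ^ 2) / 2 := by rw [← sum_div, sum_add_distrib]
    _ ≤ 1 := by linarith

section Tensor

variable {d1 d2 d3 : ℕ}

theorem enorm_eq_sqrt_dotProduct {d : ℕ} (x : Fin d → ℝ) : _root_.enorm x = √(x ⬝ᵥ x) := by
  simp [_root_.enorm, dotProduct, sq]

theorem enorm_nonneg {d : ℕ} (x : Fin d → ℝ) : 0 ≤ _root_.enorm x :=
  Real.sqrt_nonneg _

theorem abs_le_enorm {d : ℕ} (x : Fin d → ℝ) (a : Fin d) : |x a| ≤ _root_.enorm x := by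
  rw [_root_.enorm, ← Real.sqrt_sq_eq_abs]
  exact Real.sqrt_le_sqrt (single_le_sum (fun i _ => sq_nonneg (x i)) (mem_univ a))

theorem eq_zero_of_enorm_eq_zero {d : ℕ} {x : Fin d → ℝ} (h : _root_.enorm x = 0) : x = 0 := by
  have hx : 0 ≤ x ⬝ᵥ x := sum_nonneg fun i _ => mul_self_nonneg (x i)
  rw [enorm_eq_sqrt_dotProduct, Real.sqrt_eq_zero hx] at h
  exact dotProduct_self_eq_zero.1 h

theorem enorm_le_one_iff_s10 {d : ℕ} {x : Fin d → ℝ} : _root_.enorm x ≤ 1 ↔ x ⬝ᵥ x ≤ 1 := by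
  rw [enorm_eq_sqrt_dotProduct, Real.sqrt_le_one]

theorem enorm_smul_eq_abs_mul {d : ℕ} (t : ℝ) (x : Fin d → ℝ) :
    _root_.enorm (t • x) = |t| * _root_.enorm x := by
  have hx : 0 ≤ x ⬝ᵥ x := sum_nonneg fun i _ => mul_self_nonneg (x i)
  rw [enorm_eq_sqrt_dotProduct, enorm_eq_sqrt_dotProduct, smul_dotProduct, dotProduct_smul,
    smul_smul, smul_eq_mul, Real.sqrt_mul' _ hx, ← sq, Real.sqrt_sq_eq_abs]

theorem enorm_inv_smul_self {d : ℕ} {x : Fin d → ℝ} (h : _root_.enorm x ≠ 0) :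
    _root_.enorm ((_root_.enorm x)⁻¹ • x) = 1 := by
  rw [enorm_smul_eq_abs_mul, abs_inv, abs_of_nonneg (enorm_nonneg x), inv_mul_cancel₀ h]

noncomputable def tinnerBilin :
    (Fin d1 → Fin d2 → Fin d3 → ℝ) →ₗ[ℝ] (Fin d1 → Fin d2 → Fin d3 → ℝ) →ₗ[ℝ] ℝ :=
  LinearMap.mk₂ ℝ tinner
    (fun _ _ _ => by simp only [tinner, Pi.add_apply, add_mul, sum_add_distrib])
    (fun _ _ _ => by simp only [tinner, Pi.smul_apply, smul_eq_mul, mul_sum, mul_assoc])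
    (fun _ _ _ => by simp only [tinner, Pi.add_apply, mul_add, sum_add_distrib])
    (fun _ _ _ => by simp only [tinner, Pi.smul_apply, smul_eq_mul, mul_sum, mul_left_comm])

theorem tinnerBilin_apply (Y Z : Fin d1 → Fin d2 → Fin d3 → ℝ) : tinnerBilin Y Z = tinner Y Z :=
  rfl

theorem tinner_tOuter_tOuter_s10 (p x : Fin d1 → ℝ) (q y : Fin d2 → ℝ) (s z : Fin d3 → ℝ) :
    tinner (tOuter p q s) (tOuter x y z) = (p ⬝ᵥ x) * (q ⬝ᵥ y) * (s ⬝ᵥ z) := by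
  simp only [tinner, tOuter, dotProduct]
  rw [sum_mul_sum, sum_mul]
  refine sum_congr rfl fun _ _ => ?_
  rw [sum_mul_sum]
  exact sum_congr rfl fun _ _ => sum_congr rfl fun _ _ => by ring

theorem tOuter_smul_left (a : ℝ) (x : Fin d1 → ℝ) (y : Fin d2 → ℝ) (z : Fin d3 → ℝ) :
    tOuter (a • x) y z = a • tOuter x y z := by
  funext; simp only [tOuter, Pi.smul_apply, smul_eq_mul]; ring

theorem tOuter_smul_smul_smul (a b c : ℝ) (x : Fin d1 → ℝ) (y : Fin d2 → ℝ) (z : Fin d3 → ℝ) :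
    tOuter (a • x) (b • y) (c • z) = (a * b * c) • tOuter x y z := by
  funext; simp only [tOuter, Pi.smul_apply, smul_eq_mul]; ring

theorem tOuter_eq_zero {x : Fin d1 → ℝ} {y : Fin d2 → ℝ} {z : Fin d3 → ℝ}
    (h : x = 0 ∨ y = 0 ∨ z = 0) : tOuter x y z = 0 := by
  rcases h with rfl | rfl | rfl <;> funext <;> simp [tOuter]

theorem tinner_tOuter_le_specNorm (Y : Fin d1 → Fin d2 → Fin d3 → ℝ)
    {x : Fin d1 → ℝ} {y : Fin d2 → ℝ} {z : Fin d3 → ℝ}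
    (hx : _root_.enorm x ≤ 1) (hy : _root_.enorm y ≤ 1) (hz : _root_.enorm z ≤ 1) :
    tinner Y (tOuter x y z) ≤ specNorm Y := by
  refine le_csSup ⟨∑ a, ∑ b, ∑ c, |Y a b c|, ?_⟩ ⟨x, y, z, hx, hy, hz, rfl⟩
  rintro t ⟨x, y, z, hx, hy, hz, rfl⟩
  refine sum_le_sum fun a _ => sum_le_sum fun b _ => sum_le_sum fun c _ => ?_
  have hxa := (abs_le_enorm x a).trans hx
  have hyb := (abs_le_enorm y b).trans hy
  have hzc := (abs_le_enorm z c).trans hz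
  calc Y a b c * (x a * y b * z c) ≤ |Y a b c * (x a * y b * z c)| := le_abs_self _
    _ = |Y a b c| * (|x a| * |y b| * |z c|) := by simp only [abs_mul]
    _ ≤ |Y a b c| := mul_le_of_le_one_right (abs_nonneg _)
        (mul_le_one₀ (mul_le_one₀ hxa (abs_nonneg _) hyb) (abs_nonneg _) hzc)

theorem tinner_tOuter_le_specNorm_mul (Y : Fin d1 → Fin d2 → Fin d3 → ℝ)
    (x : Fin d1 → ℝ) (y : Fin d2 → ℝ) (z : Fin d3 → ℝ) :
    tinner Y (tOuter x y z) ≤ specNorm Y * (_root_.enorm x * _root_.enorm y * _root_.enorm z) := by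
  set a := _root_.enorm x
  set b := _root_.enorm y
  set c := _root_.enorm z
  by_cases h : a * b * c = 0
  · have hzero : tOuter x y z = 0 := by
      rcases mul_eq_zero.1 h with h | h
      · rcases mul_eq_zero.1 h with h | h <;> simp [tOuter_eq_zero, eq_zero_of_enorm_eq_zero h]
      · simp [tOuter_eq_zero, eq_zero_of_enorm_eq_zero h]
    rw [hzero, h, mul_zero, ← tinnerBilin_apply, map_zero]
  · have ha : a ≠ 0 := left_ne_zero_of_mul (left_ne_zero_of_mul h)
    have hb : b ≠ 0 := right_ne_zero_of_mul (left_ne_zero_of_mul h)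
    have hc : c ≠ 0 := right_ne_zero_of_mul h
    have hscale : tOuter x y z = (a * b * c) • tOuter (a⁻¹ • x) (b⁻¹ • y) (c⁻¹ • z) := by
      rw [tOuter_smul_smul_smul, smul_smul, show a * b * c * (a⁻¹ * b⁻¹ * c⁻¹) = 1 by field_simp,
        one_smul]
    calc tinner Y (tOuter x y z)
        = (a * b * c) * tinner Y (tOuter (a⁻¹ • x) (b⁻¹ • y) (c⁻¹ • z)) := by
          rw [hscale, ← tinnerBilin_apply, map_smul, smul_eq_mul, tinnerBilin_apply]
      _ ≤ (a * b * c) * specNorm Y :=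
          mul_le_mul_of_nonneg_left (tinner_tOuter_le_specNorm Y (enorm_inv_smul_self ha).le
            (enorm_inv_smul_self hb).le (enorm_inv_smul_self hc).le)
            (mul_nonneg (mul_nonneg (enorm_nonneg x) (enorm_nonneg y)) (enorm_nonneg z))
      _ = specNorm Y * (a * b * c) := mul_comm _ _

theorem tinner_sum_smul_tOuter_le {ι : Type*} [Fintype ι] (Y : Fin d1 → Fin d2 → Fin d3 → ℝ)
    (lam : ι → ℝ) (u : ι → Fin d1 → ℝ) (v : ι → Fin d2 → ℝ) (w : ι → Fin d3 → ℝ) :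
    tinner Y (∑ i, lam i • tOuter (u i) (v i) (w i)) ≤ specNorm Y *
      ∑ i, |lam i| * (_root_.enorm (u i) * _root_.enorm (v i) * _root_.enorm (w i)) := by
  rw [← tinnerBilin_apply, map_sum, mul_sum]
  refine sum_le_sum fun i _ => ?_
  calc tinnerBilin Y (lam i • tOuter (u i) (v i) (w i))
      = tinner Y (tOuter (lam i • u i) (v i) (w i)) := by
        rw [tOuter_smul_left, tinnerBilin_apply]
    _ ≤ specNorm Y * (_root_.enorm (lam i • u i) * _root_.enorm (v i) * _root_.enorm (w i)) :=
        tinner_tOuter_le_specNorm_mul Y _ _ _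
    _ = specNorm Y *
          (|lam i| * (_root_.enorm (u i) * _root_.enorm (v i) * _root_.enorm (w i))) := by
        rw [enorm_smul_eq_abs_mul]; ring

end Tensor

section Biorthogonal

variable {d1 d2 d3 : ℕ} {ι : Type*} [Fintype ι] [DecidableEq ι]
  {u : ι → Fin d1 → ℝ} {v : ι → Fin d2 → ℝ} {w : ι → Fin d3 → ℝ}

theorem tinner_sum_smul_tOuter_biorthogonal
    (hu : ∀ i j, u i ⬝ᵥ u j = if i = j then 1 else 0)
    (hvw : ∀ i j, (v i ⬝ᵥ v j) * (w i ⬝ᵥ w j) = if i = j then 1 else 0) (a b : ι → ℝ) :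
    tinner (∑ i, a i • tOuter (u i) (v i) (w i)) (∑ j, b j • tOuter (u j) (v j) (w j)) =
      ∑ i, a i * b i := by
  simp only [← tinnerBilin_apply, map_sum, map_smul, LinearMap.sum_apply, LinearMap.smul_apply,
    smul_eq_mul]
  simp [tinnerBilin_apply, tinner_tOuter_tOuter_s10, hu, hvw, mul_comm (b _)]

theorem specNorm_sum_smul_tOuter_le_one
    (hu : ∀ i j, u i ⬝ᵥ u j = if i = j then 1 else 0)
    (hvw : ∀ i j, (v i ⬝ᵥ v j) * (w i ⬝ᵥ w j) = if i = j then 1 else 0)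
    {s : ι → ℝ} (hs : ∀ i, |s i| ≤ 1) :
    specNorm (∑ i, s i • tOuter (u i) (v i) (w i)) ≤ 1 := by
  have h0 {d : ℕ} : _root_.enorm (0 : Fin d → ℝ) ≤ 1 := enorm_le_one_iff_s10.2 (by simp)
  refine csSup_le ⟨_, 0, 0, 0, h0, h0, h0, rfl⟩ ?_
  rintro t ⟨x, y, z, hx, hy, hz, rfl⟩
  have hux : ∑ i, (u i ⬝ᵥ x) ^ 2 ≤ 1 :=
    (sum_sq_dotProduct_le_of_orthonormal hu x).trans (enorm_le_one_iff_s10.1 hx)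
  have hvwyz : ∑ i, ((v i ⬝ᵥ y) * (w i ⬝ᵥ z)) ^ 2 ≤ 1 := by
    have hbessel := sum_sq_dotProduct_le_of_orthonormal
      (f := fun i (p : Fin d2 × Fin d3) => v i p.1 * w i p.2)
      (fun i j => by simpa only [dotProduct_prod_mul] using hvw i j)
      (fun p : Fin d2 × Fin d3 => y p.1 * z p.2)
    simp only [dotProduct_prod_mul] at hbessel
    exact hbessel.trans (mul_le_one₀ (enorm_le_one_iff_s10.1 hy)
      (sum_nonneg fun c _ => mul_self_nonneg (z c)) (enorm_le_one_iff_s10.1 hz))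
  rw [← tinnerBilin_apply, map_sum, LinearMap.sum_apply]
  simp only [map_smul, LinearMap.smul_apply, smul_eq_mul, tinnerBilin_apply, tinner_tOuter_tOuter_s10,
    mul_assoc]
  exact sum_mul_mul_le_one hs hux hvwyz

end Biorthogonal

theorem nucNorm_biorthogonal_general {d1 d2 d3 r : ℕ}
    (lam : Fin r → ℝ) (u : Fin r → Fin d1 → ℝ) (v : Fin r → Fin d2 → ℝ)
    (w : Fin r → Fin d3 → ℝ)
    (hu : ∀ i j, (∑ a, u i a * u j a) = if i = j then 1 else 0)
    (hvw : ∀ i j, (∑ b, v i b * v j b) * (∑ c, w i c * w j c)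
                    = if i = j then 1 else 0)
    (X : Fin d1 → Fin d2 → Fin d3 → ℝ)
    (hX : X = fun a b c => ∑ i, lam i * u i a * v i b * w i c) :
    nucNorm X = ∑ i, Real.sqrt (∑ b, ∑ c, (lam i * v i b * w i c) ^ 2) := by
  have hX' : X = ∑ i, lam i • tOuter (u i) (v i) (w i) := by
    subst hX; funext a b c; simp [tOuter, mul_assoc]
  have hnorm (i : Fin r) : _root_.enorm (u i) * _root_.enorm (v i) * _root_.enorm (w i) = 1 := by
    have hv : 0 ≤ v i ⬝ᵥ v i := sum_nonneg fun b _ => mul_self_nonneg (v i b)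
    rw [enorm_eq_sqrt_dotProduct, enorm_eq_sqrt_dotProduct, enorm_eq_sqrt_dotProduct, mul_assoc,
      ← Real.sqrt_mul hv]
    simp [dotProduct, hu i i, hvw i i]
  have hfrob (i : Fin r) : √(∑ b, ∑ c, (lam i * v i b * w i c) ^ 2) = |lam i| := by
    rw [sum_sum_mul_mul_sq]
    simp [dotProduct, hvw i i, Real.sqrt_sq_eq_abs]
  simp only [hfrob]
  have hsign (i : Fin r) : |(SignType.sign (lam i) : ℝ)| ≤ 1 := by
    cases SignType.sign (lam i) <;> simp
  refine IsGreatest.csSup_eq ⟨⟨∑ i, (SignType.sign (lam i) : ℝ) • tOuter (u i) (v i) (w i),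
    specNorm_sum_smul_tOuter_le_one hu hvw hsign, ?_⟩, ?_⟩
  · rw [hX', tinner_sum_smul_tOuter_biorthogonal hu hvw]
    simp [sign_mul_self]
  · rintro t ⟨Y, hY, rfl⟩
    calc tinner Y X ≤ specNorm Y * ∑ i, |lam i| := by
          simpa only [hX', hnorm, mul_one] using tinner_sum_smul_tOuter_le Y lam u v w
      _ ≤ ∑ i, |lam i| := mul_le_of_le_one_left (sum_nonneg fun i _ => abs_nonneg _) hY

theorem nucNorm_biorthogonal {d1 d2 d3 r : ℕ}
    (lam : Fin r → ℝ) (u : Fin r → Fin d1 → ℝ) (v : Fin r → Fin d2 → ℝ)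
    (w : Fin r → Fin d3 → ℝ)
    (hlam : ∀ i, lam i ≠ 0)
    (hu : ∀ i j, (∑ a, u i a * u j a) = if i = j then 1 else 0)
    (hvw : ∀ i j, (∑ b, v i b * v j b) * (∑ c, w i c * w j c)
                    = if i = j then 1 else 0)
    (X : Fin d1 → Fin d2 → Fin d3 → ℝ)
    (hX : X = fun a b c => ∑ i, lam i * u i a * v i b * w i c) :
    nucNorm X = ∑ i, Real.sqrt (∑ b, ∑ c, (lam i * v i b * w i c) ^ 2) :=
  nucNorm_biorthogonal_general lam u v w hu hvw X hX
end

section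
/- For every positive integer d and integer m ≥ 1, define C'_{m,d} = min over unit vectors a ∈ ℝ^d of max over u ∈ B'_{m,d} of a^⊤u, where B'_{m,d} = {u ∈ ℝ^d : ‖u‖ ≤ 1 and each coordinate u_i satisfies u_i² ∈ [0,1] \ (0, 2^{-m})}. Then C'_{m,d} ≥ ((2^m − 1)/(2^m + d − 2))^{1/2}. -/
def thinBall (m d : ℕ) : Set (Fin d → ℝ) :=
  {u | _root_.enorm u ≤ 1 ∧
    ∀ i, u i ^ 2 ∈ Set.Icc (0 : ℝ) 1 \ Set.Ioo (0 : ℝ) ((2 : ℝ) ^ m)⁻¹}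

open Finset

section TopBlock

variable {ι : Type*} (M : ℝ) (w : ι → ℝ)

structure IsTopBlock (S : Finset ι) : Prop where
  top : ∀ i ∈ S, ∀ j ∉ S, w j ≤ w i
  sum_le : ∀ i ∈ S, ∑ k ∈ S, w k ≤ M * w i

variable {M w}

theorem IsTopBlock.empty : IsTopBlock M w ∅ :=
  ⟨by simp, by simp⟩

theorem IsTopBlock.insert_of_forall_le [DecidableEq ι] {S : Finset ι} {j : ι}
    (hS : IsTopBlock M w S) (hM : 0 ≤ M) (hj : j ∉ S) (hj_max : ∀ k ∉ S, w k ≤ w j)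
    (hj_sum : ∑ k ∈ S, w k + w j ≤ M * w j) :
    IsTopBlock M w (insert j S) := by
  refine ⟨fun i hi k hk => ?_, fun i hi => ?_⟩
  · rw [mem_insert, not_or] at hk
    rcases mem_insert.mp hi with rfl | hi
    · exact hj_max k hk.2
    · exact hS.top i hi k hk.2
  · rw [sum_insert hj, add_comm]
    rcases mem_insert.mp hi with rfl | hi
    · exact hj_sum
    · exact hj_sum.trans (mul_le_mul_of_nonneg_left (hS.top i hi j hj) hM)

theorem IsTopBlock.exists_heavier [Fintype ι] [DecidableEq ι] {S : Finset ι}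
    (hS : IsTopBlock M w S) (hw : ∀ i, 0 ≤ w i) (hw_sum : ∑ i, w i = 1) (hM : 1 ≤ M)
    (hlt : (M + Fintype.card ι - 2) * ∑ k ∈ S, w k < M - 1) :
    ∃ T, IsTopBlock M w T ∧ ∑ k ∈ S, w k < ∑ k ∈ T, w k := by
  set s := ∑ k ∈ S, w k
  have hs : 0 ≤ s := sum_nonneg fun k _ => hw k
  have hcard : 1 ≤ (Fintype.card ι : ℝ) := by
    have : Nonempty ι := by
      by_contra h
      simp [not_nonempty_iff.mp h] at hw_sum
    exact_mod_cast Fintype.card_pos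
  have hs_lt : s < 1 := by nlinarith
  have hcompl : ∑ k ∈ Sᶜ, w k = 1 - s := by
    linarith [sum_add_sum_compl S w]
  have hcompl_ne : Sᶜ.Nonempty := by
    rw [nonempty_iff_ne_empty]
    intro h
    simp only [h, sum_empty] at hcompl
    linarith
  obtain ⟨j, hj, hj_max⟩ := exists_max_image Sᶜ w hcompl_ne
  rw [mem_compl] at hj
  have havg : 1 - s ≤ (Sᶜ.card : ℝ) * w j := by
    simpa [hcompl] using sum_le_card_nsmul Sᶜ w (w j) hj_max
  have hj_big : 0 < w j ∧ s ≤ (M - 1) * w j := by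
    rcases S.eq_empty_or_nonempty with rfl | hne
    · simp only [s, sum_empty, card_compl, card_empty, Nat.sub_zero] at havg ⊢
      constructor <;> nlinarith
    · have : (Sᶜ.card : ℝ) ≤ Fintype.card ι - 1 := by
        rw [le_sub_iff_add_le]
        exact_mod_cast (card_compl_lt_iff_nonempty S).mpr hne
      constructor <;> nlinarith
  refine ⟨insert j S, ?_, by rw [sum_insert hj]; linarith⟩
  exact hS.insert_of_forall_le (by linarith) hj (fun k hk => hj_max k (mem_compl.mpr hk))
    (by linarith)

theorem exists_isTopBlock_sub_one_le_mul_sum [Fintype ι] (hw : ∀ i, 0 ≤ w i)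
    (hw_sum : ∑ i, w i = 1) (hM : 1 ≤ M) :
    ∃ S, IsTopBlock M w S ∧ M - 1 ≤ (M + Fintype.card ι - 2) * ∑ k ∈ S, w k := by
  classical
  obtain ⟨S, hS, hS_max⟩ := exists_max_image (univ.filter (IsTopBlock M w))
    (fun S => ∑ k ∈ S, w k) ⟨∅, mem_filter.mpr ⟨mem_univ _, IsTopBlock.empty⟩⟩
  replace hS := (mem_filter.mp hS).2
  refine ⟨S, hS, ?_⟩
  by_contra! hlt
  obtain ⟨T, hT, hST⟩ := hS.exists_heavier hw hw_sum hM hlt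
  exact (hS_max T (mem_filter.mpr ⟨mem_univ _, hT⟩)).not_gt hST

end TopBlock

section ThinBall

variable {m d : ℕ}

theorem mem_thinBall_of_sum_sq_le_one {u : Fin d → ℝ} (h_sum : ∑ i, u i ^ 2 ≤ 1)
    (h_thin : ∀ i, u i ≠ 0 → ((2 : ℝ) ^ m)⁻¹ ≤ u i ^ 2) : u ∈ thinBall m d := by
  refine ⟨Real.sqrt_le_one.mpr h_sum, fun i => ⟨⟨sq_nonneg _, ?_⟩, fun hi => ?_⟩⟩
  · exact (single_le_sum (fun k _ => sq_nonneg (u k)) (mem_univ i)).trans h_sum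
  · rcases eq_or_ne (u i) 0 with h | h
    · simp [h] at hi
    · exact (h_thin i h).not_gt hi.2

theorem sum_mul_le_enorm_of_mem_thinBall (a : Fin d → ℝ) {u : Fin d → ℝ}
    (hu : u ∈ thinBall m d) : ∑ i, a i * u i ≤ _root_.enorm a :=
  (Real.sum_mul_le_sqrt_mul_sqrt _ _ _).trans
    (mul_le_of_le_one_right (Real.sqrt_nonneg _) hu.1)

theorem bddAbove_sum_mul_thinBall (a : Fin d → ℝ) :
    BddAbove {t : ℝ | ∃ u ∈ thinBall m d, t = ∑ i, a i * u i} := by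
  refine ⟨_root_.enorm a, ?_⟩
  rintro _ ⟨v, hv, rfl⟩
  exact sum_mul_le_enorm_of_mem_thinBall a hv

theorem exists_mem_thinBall_sum_mul_eq_sqrt (a : Fin d → ℝ) (S : Finset (Fin d))
    (hS : ∀ i ∈ S, ∑ k ∈ S, a k ^ 2 ≤ 2 ^ m * a i ^ 2) :
    ∃ u ∈ thinBall m d, ∑ i, a i * u i = √(∑ k ∈ S, a k ^ 2) := by
  classical
  set s := ∑ k ∈ S, a k ^ 2
  have hs : 0 ≤ s := sum_nonneg fun k _ => sq_nonneg (a k)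
  rcases hs.eq_or_lt with hs | hs
  · refine ⟨0, mem_thinBall_of_sum_sq_le_one (by simp) (by simp), ?_⟩
    rw [← hs, Real.sqrt_zero]
    simp
  let u : Fin d → ℝ := fun i => if i ∈ S then a i / √s else 0
  have hu_sq : ∀ i, u i ^ 2 = if i ∈ S then a i ^ 2 / s else 0 := fun i => by
    by_cases hi : i ∈ S <;> simp [u, hi, div_pow, Real.sq_sqrt hs.le]
  refine ⟨u, mem_thinBall_of_sum_sq_le_one ?_ fun i hi => ?_, ?_⟩
  · simp only [hu_sq, sum_ite_mem, univ_inter, ← sum_div, s]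
    exact div_self_le_one _
  · have hiS : i ∈ S := by by_contra h; simp [u, h] at hi
    rw [hu_sq, if_pos hiS, le_div_iff₀ hs, inv_mul_le_iff₀ (by positivity)]
    exact hS i hiS
  · have : ∀ i, a i * u i = if i ∈ S then a i ^ 2 / √s else 0 := fun i => by
      by_cases hi : i ∈ S <;> simp [u, hi, sq, mul_div_assoc]
    rw [sum_congr rfl fun i _ => this i, sum_ite_mem, univ_inter, ← sum_div,
      div_eq_iff (Real.sqrt_pos.mpr hs).ne', Real.mul_self_sqrt hs.le]

end ThinBall

theorem thinning_lower_bound_general {m d : ℕ} (hd : 1 ≤ d)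
    (a : Fin d → ℝ) (ha : _root_.enorm a = 1) :
    Real.sqrt (((2 : ℝ) ^ m - 1) / ((2 : ℝ) ^ m + d - 2))
      ≤ sSup {t : ℝ | ∃ u ∈ thinBall m d, t = ∑ i, a i * u i} := by
  obtain ⟨S, hS, hS_sum⟩ := exists_isTopBlock_sub_one_le_mul_sum (M := 2 ^ m)
    (fun i => sq_nonneg (a i)) (Real.sqrt_eq_one.mp ha) (one_le_pow₀ one_le_two)
  obtain ⟨u, hu, hu_dot⟩ := exists_mem_thinBall_sum_mul_eq_sqrt a S hS.sum_le
  have hd' : (1 : ℝ) ≤ d := by exact_mod_cast hd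
  have hM : (1 : ℝ) ≤ 2 ^ m := one_le_pow₀ one_le_two
  rw [Fintype.card_fin] at hS_sum
  calc √(((2 : ℝ) ^ m - 1) / (2 ^ m + d - 2))
      ≤ √(∑ k ∈ S, a k ^ 2) := Real.sqrt_le_sqrt <|
        div_le_of_le_mul₀ (by linarith) (sum_nonneg fun k _ => sq_nonneg _) (by linarith)
    _ ≤ _ := le_csSup (bddAbove_sum_mul_thinBall a) ⟨u, hu, hu_dot.symm⟩

theorem thinning_lower_bound {m d : ℕ} (hm : 1 ≤ m) (hd : 1 ≤ d)
    (a : Fin d → ℝ) (ha : _root_.enorm a = 1) :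
    Real.sqrt (((2 : ℝ) ^ m - 1) / ((2 : ℝ) ^ m + d - 2))
      ≤ sSup {t : ℝ | ∃ u ∈ thinBall m d, t = ∑ i, a i * u i} :=
  thinning_lower_bound_general hd a ha
end
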